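/- arXiv:2003.03691 — 5 statements merged into one kernel-verified Lean document; each statement's English description precedes it below -/
import Mathlib

section
/- For K ≥ 2, the cosine of the angle between any two distinct simplex vertices w_i and w_j equals 1/(1-K); equivalently, all pairwise angles among the K simplex vertices are equal. -/
open scoped RealInnerProductSpace

/-- The angle-based simplex vertices in `ℝ^{K-1}` (0-indexed: `simplexVertex K 0` is `w_1`). -/
noncomputable def simplexVertex (K : ℕ) (j : Fin K) : EuclideanSpace ℝ (Fin (K - 1)) :=
  if (j : ℕ) = 0 then WithLp.toLp 2 (fun _ => (Real.sqrt ((K : ℝ) - 1))⁻¹)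
  else WithLp.toLp 2 (fun i => -((1 + Real.sqrt K) / (((K : ℝ) - 1) * Real.sqrt ((K : ℝ) - 1)))
      + if (i : ℕ) + 1 = (j : ℕ) then Real.sqrt ((K : ℝ) / ((K : ℝ) - 1)) else 0)

/-!
Put `c = 1/√(K-1)`. Then `w_1 = c·𝟏`, and for `j ≥ 2`, `w_j = a·𝟏 + b·e_{j-1}` with the
coordinates `a`, `b` of `simplexCommonCoord`, `simplexBumpCoord`. Every Gram entry is then a
polynomial in `a, b, c`, and three identities decide them all:
`(K-1)a + b = -c`, `a(b-c) = -c²` and `b² - c² = 1`.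
They give `⟪w_i, w_j⟫ = -c² = 1/(1-K)` for `i ≠ j` and `‖w_j‖² = 1`.
-/

theorem sum_const_add_ite_mul_const_add_ite {ι R : Type*} [Fintype ι] [DecidableEq ι]
    [CommSemiring R] (a b c d : R) (p q : ι) :
    ∑ x, (a + if x = p then b else 0) * (c + if x = q then d else 0)
      = Fintype.card ι * (a * c) + a * d + b * c + if p = q then b * d else 0 := by
  simp only [add_mul, mul_add, mul_ite, ite_mul, mul_zero, zero_mul, Finset.sum_add_distrib,
    Finset.sum_ite_eq', Finset.mem_univ, if_true, Finset.sum_const, Finset.card_univ, nsmul_eq_mul]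
  simp only [eq_comm (a := q)]
  ring

theorem sum_const_mul_const_add_ite {ι R : Type*} [Fintype ι] [DecidableEq ι]
    [CommSemiring R] (a c d : R) (q : ι) :
    ∑ x, a * (c + if x = q then d else 0) = Fintype.card ι * (a * c) + a * d := by
  simpa using sum_const_add_ite_mul_const_add_ite a 0 c d q q

theorem real_inner_euclideanSpace_eq_sum {ι : Type*} [Fintype ι] (v w : EuclideanSpace ℝ ι) :
    ⟪v, w⟫ = ∑ x, v x * w x := by
  simp [PiLp.inner_apply, mul_comm]

noncomputable def simplexCommonCoord (k : ℝ) : ℝ :=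
  -((1 + √k) / ((k - 1) * √(k - 1)))

noncomputable def simplexBumpCoord (k : ℝ) : ℝ :=
  √(k / (k - 1))

theorem inv_sqrt_sub_one_sq {k : ℝ} (hk : 1 < k) : (√(k - 1))⁻¹ ^ 2 = (k - 1)⁻¹ := by
  rw [inv_pow, Real.sq_sqrt (by linarith)]

theorem sub_one_mul_simplexCommonCoord_add_simplexBumpCoord {k : ℝ} (hk : 1 < k) :
    (k - 1) * simplexCommonCoord k + simplexBumpCoord k = -(√(k - 1))⁻¹ := by
  have hk1 : k - 1 ≠ 0 := by linarith
  rw [simplexCommonCoord, simplexBumpCoord, Real.sqrt_div (by linarith)]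
  field_simp
  ring

theorem simplexCommonCoord_mul_sub {k : ℝ} (hk : 1 < k) :
    simplexCommonCoord k * (simplexBumpCoord k - (√(k - 1))⁻¹) = -(√(k - 1))⁻¹ ^ 2 := by
  have hs : √(k - 1) ≠ 0 := (Real.sqrt_pos.2 (by linarith)).ne'
  have ht2 : √k ^ 2 = k := Real.sq_sqrt (by linarith)
  have hk1 : k - 1 ≠ 0 := by linarith
  rw [simplexCommonCoord, simplexBumpCoord, Real.sqrt_div (by linarith)]
  field_simp
  linear_combination -ht2

theorem simplexBumpCoord_sq_sub {k : ℝ} (hk : 1 < k) :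
    simplexBumpCoord k ^ 2 - (√(k - 1))⁻¹ ^ 2 = 1 := by
  have hk1 : k - 1 ≠ 0 := by linarith
  rw [simplexBumpCoord, Real.sq_sqrt (div_nonneg (by linarith) (by linarith)),
    inv_sqrt_sub_one_sq hk]
  field_simp

theorem simplexVertex_apply_of_val_eq_zero {K : ℕ} {j : Fin K} (hj : (j : ℕ) = 0)
    (x : Fin (K - 1)) : simplexVertex K j x = (√((K : ℝ) - 1))⁻¹ := by
  simp [simplexVertex, hj]

theorem simplexVertex_apply_of_val_ne_zero {K : ℕ} {j : Fin K} (hj : (j : ℕ) ≠ 0)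
    (x : Fin (K - 1)) :
    simplexVertex K j x = simplexCommonCoord K
      + if x = ⟨j - 1, by omega⟩ then simplexBumpCoord K else 0 := by
  simp only [simplexVertex, hj, if_false, simplexCommonCoord, simplexBumpCoord, Fin.ext_iff]
  congr 2
  simp only [eq_iff_iff]
  omega

section

variable {K : ℕ}

theorem card_fin_sub_one_cast (hK : 1 ≤ K) : (Fintype.card (Fin (K - 1)) : ℝ) = K - 1 := by
  rw [Fintype.card_fin, Nat.cast_sub hK, Nat.cast_one]

theorem one_div_one_sub_eq_neg_inv (k : ℝ) : 1 / (1 - k) = -(k - 1)⁻¹ := by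
  rw [one_div, ← neg_sub, inv_neg]

theorem inner_simplexVertex_self_of_val_eq_zero (hK : 2 ≤ K) {j : Fin K} (hj : (j : ℕ) = 0) :
    ⟪simplexVertex K j, simplexVertex K j⟫ = 1 := by
  have hk : 1 < (K : ℝ) := Nat.one_lt_cast.2 hK
  rw [real_inner_euclideanSpace_eq_sum]
  simp only [simplexVertex_apply_of_val_eq_zero hj, Finset.sum_const, Finset.card_univ,
    nsmul_eq_mul, card_fin_sub_one_cast (by omega : 1 ≤ K)]
  rw [← sq, inv_sqrt_sub_one_sq hk, mul_inv_cancel₀ (by linarith)]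

theorem inner_simplexVertex_of_val_eq_zero_of_val_ne_zero (hK : 2 ≤ K) {i j : Fin K}
    (hi : (i : ℕ) = 0) (hj : (j : ℕ) ≠ 0) :
    ⟪simplexVertex K i, simplexVertex K j⟫ = 1 / (1 - K) := by
  have hk : 1 < (K : ℝ) := Nat.one_lt_cast.2 hK
  rw [real_inner_euclideanSpace_eq_sum, one_div_one_sub_eq_neg_inv]
  simp only [simplexVertex_apply_of_val_eq_zero hi, simplexVertex_apply_of_val_ne_zero hj,
    sum_const_mul_const_add_ite, card_fin_sub_one_cast (by omega : 1 ≤ K)]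
  linear_combination (√((K : ℝ) - 1))⁻¹ * sub_one_mul_simplexCommonCoord_add_simplexBumpCoord hk
    - inv_sqrt_sub_one_sq hk

theorem inner_simplexVertex_of_val_ne_zero_of_ne (hK : 2 ≤ K) {i j : Fin K}
    (hi : (i : ℕ) ≠ 0) (hj : (j : ℕ) ≠ 0) (hij : i ≠ j) :
    ⟪simplexVertex K i, simplexVertex K j⟫ = 1 / (1 - K) := by
  have hk : 1 < (K : ℝ) := Nat.one_lt_cast.2 hK
  have hpq : (⟨i - 1, by omega⟩ : Fin (K - 1)) ≠ ⟨j - 1, by omega⟩ := by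
    simp only [ne_eq, Fin.mk.injEq]
    omega
  rw [real_inner_euclideanSpace_eq_sum, one_div_one_sub_eq_neg_inv]
  simp only [simplexVertex_apply_of_val_ne_zero hi, simplexVertex_apply_of_val_ne_zero hj,
    sum_const_add_ite_mul_const_add_ite, card_fin_sub_one_cast (by omega : 1 ≤ K), if_neg hpq]
  linear_combination simplexCommonCoord K * sub_one_mul_simplexCommonCoord_add_simplexBumpCoord hk
    + simplexCommonCoord_mul_sub hk - inv_sqrt_sub_one_sq hk

theorem inner_simplexVertex_self_of_val_ne_zero (hK : 2 ≤ K) {j : Fin K} (hj : (j : ℕ) ≠ 0) :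
    ⟪simplexVertex K j, simplexVertex K j⟫ = 1 := by
  have hk : 1 < (K : ℝ) := Nat.one_lt_cast.2 hK
  rw [real_inner_euclideanSpace_eq_sum]
  simp only [simplexVertex_apply_of_val_ne_zero hj, sum_const_add_ite_mul_const_add_ite,
    card_fin_sub_one_cast (by omega : 1 ≤ K), if_true]
  linear_combination simplexCommonCoord K * sub_one_mul_simplexCommonCoord_add_simplexBumpCoord hk
    + simplexCommonCoord_mul_sub hk + simplexBumpCoord_sq_sub hk

theorem inner_simplexVertex_self (hK : 2 ≤ K) (j : Fin K) :
    ⟪simplexVertex K j, simplexVertex K j⟫ = 1 := by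
  by_cases hj : (j : ℕ) = 0
  · exact inner_simplexVertex_self_of_val_eq_zero hK hj
  · exact inner_simplexVertex_self_of_val_ne_zero hK hj

theorem norm_simplexVertex (hK : 2 ≤ K) (j : Fin K) : ‖simplexVertex K j‖ = 1 := by
  have h := inner_simplexVertex_self hK j
  rw [real_inner_self_eq_norm_sq] at h
  exact (pow_eq_one_iff_of_nonneg (norm_nonneg _) two_ne_zero).1 h

theorem inner_simplexVertex_of_ne (hK : 2 ≤ K) {i j : Fin K} (hij : i ≠ j) :
    ⟪simplexVertex K i, simplexVertex K j⟫ = 1 / (1 - K) := by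
  rcases eq_or_ne (i : ℕ) 0 with hi | hi <;> rcases eq_or_ne (j : ℕ) 0 with hj | hj
  · exact absurd (Fin.ext (hi.trans hj.symm)) hij
  · exact inner_simplexVertex_of_val_eq_zero_of_val_ne_zero hK hi hj
  · rw [real_inner_comm]
    exact inner_simplexVertex_of_val_eq_zero_of_val_ne_zero hK hj hi
  · exact inner_simplexVertex_of_val_ne_zero_of_ne hK hi hj hij

end

theorem simplexVertex_cos_angle (K : ℕ) (hK : 2 ≤ K) (i j : Fin K) (hij : i ≠ j) :
    ⟪simplexVertex K i, simplexVertex K j⟫ / (‖simplexVertex K i‖ * ‖simplexVertex K j‖)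
      = 1 / (1 - (K : ℝ)) := by
  rw [inner_simplexVertex_of_ne hK hij, norm_simplexVertex hK, norm_simplexVertex hK, mul_one,
    div_one]
end

section
/- (Fisher consistency of angle-based cost-sensitive loss) Suppose ℓ: ℝ → ℝ is convex, differentiable, and ℓ'(z) < 0 for all z. Let C ∈ ℝ^{K×K} have nonnegative entries with C_{jj} = 0, and let P_1, …, P_K ≥ 0 with ∑_j P_j = 1. If f* ∈ ℝ^{K-1} minimizes the risk R(f) = ∑_{j=1}^K ∑_{t=1}^K C_{j,t} P_j ℓ(-⟨w_t, f⟩), then for any indices k, k' with ∑_j C_{j,k} P_j < ∑_j C_{j,k'} P_j, it holds that ⟨w_k, f*⟩ > ⟨w_{k'}, f*⟩. -/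
/-!
Move the minimiser `f*` along the direction `w k - w k'`. Since the `w t` are unit vectors with
a common pairwise inner product `c < 1`, this direction is orthogonal to every `w t` with
`t ≠ k, k'` and has inner products `±(1 - c)` with `w k` and `w k'`, so the first-order
condition of the minimisation collapses to `q k ℓ'(-⟪w k, f*⟫) = q k' ℓ'(-⟪w k', f*⟫)`, where
`q t = ∑ j, C j t P j`. As `ℓ'` is negative and nondecreasing, `q k < q k'` forces
`⟪w k', f*⟫ < ⟪w k, f*⟫`.
-/

open scoped RealInnerProductSpace

section FirstOrder

variable {E ι : Type*} [NormedAddCommGroup E] [InnerProductSpace ℝ E] [Fintype ι]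

theorem hasDerivAt_sum_mul_comp_neg_inner_line {ℓ : ℝ → ℝ} (hdiff : Differentiable ℝ ℓ)
    (q : ι → ℝ) (w : ι → E) (x d : E) :
    HasDerivAt (fun ε : ℝ => ∑ t, q t * ℓ (-⟪w t, x + ε • d⟫))
      (∑ t, q t * (deriv ℓ (-⟪w t, x⟫) * -⟪w t, d⟫)) 0 := by
  refine HasDerivAt.fun_sum fun t _ => HasDerivAt.const_mul _ ?_
  have hline : (fun ε : ℝ => -⟪w t, x + ε • d⟫) = fun ε => -⟪w t, x⟫ + ε * -⟪w t, d⟫ := by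
    funext ε
    rw [inner_add_right, real_inner_smul_right]
    ring
  have hline' : HasDerivAt (fun ε : ℝ => -⟪w t, x + ε • d⟫) (-⟪w t, d⟫) 0 := by
    rw [hline]
    simpa using ((hasDerivAt_id (0 : ℝ)).mul_const (-⟪w t, d⟫)).const_add (-⟪w t, x⟫)
  have hcomp := (hdiff (-⟪w t, x + (0 : ℝ) • d⟫)).hasDerivAt.comp (0 : ℝ) hline'
  rw [zero_smul, add_zero] at hcomp
  exact hcomp

theorem sum_mul_deriv_mul_inner_eq_zero_of_forall_le {ℓ : ℝ → ℝ} (hdiff : Differentiable ℝ ℓ)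
    (q : ι → ℝ) (w : ι → E) (x : E)
    (hmin : ∀ y, ∑ t, q t * ℓ (-⟪w t, x⟫) ≤ ∑ t, q t * ℓ (-⟪w t, y⟫)) (d : E) :
    ∑ t, q t * deriv ℓ (-⟪w t, x⟫) * ⟪w t, d⟫ = 0 := by
  have hlocal : IsLocalMin (fun ε : ℝ => ∑ t, q t * ℓ (-⟪w t, x + ε • d⟫)) 0 :=
    IsMinOn.isLocalMin (fun ε _ => by simpa using hmin (x + ε • d)) Filter.univ_mem
  have hzero := hlocal.hasDerivAt_eq_zero (hasDerivAt_sum_mul_comp_neg_inner_line hdiff q w x d)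
  simp only [mul_neg, Finset.sum_neg_distrib, neg_eq_zero] at hzero
  simpa only [mul_assoc] using hzero

end FirstOrder

section Equiangular

variable {E ι : Type*} [NormedAddCommGroup E] [InnerProductSpace ℝ E] [DecidableEq ι]
  {w : ι → E} {c : ℝ}

theorem inner_eq_of_equiangular (hnorm : ∀ j, ‖w j‖ = 1)
    (hinner : ∀ i j, i ≠ j → ⟪w i, w j⟫ = c) (t k : ι) :
    ⟪w t, w k⟫ = c + if t = k then 1 - c else 0 := by
  split_ifs with htk
  · rw [htk, real_inner_self_eq_norm_sq, hnorm]
    ring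
  · rw [hinner t k htk, add_zero]

theorem sum_mul_inner_sub_of_equiangular [Fintype ι] (hnorm : ∀ j, ‖w j‖ = 1)
    (hinner : ∀ i j, i ≠ j → ⟪w i, w j⟫ = c) (g : ι → ℝ) (k k' : ι) :
    ∑ t, g t * ⟪w t, w k - w k'⟫ = (1 - c) * (g k - g k') := by
  have hsum : ∀ m, ∑ t, g t * ⟪w t, w m⟫ = c * ∑ t, g t + (1 - c) * g m := by
    intro m
    simp only [inner_eq_of_equiangular hnorm hinner, mul_add, mul_ite, mul_zero,
      Finset.sum_add_distrib, Finset.sum_ite_eq', Finset.mem_univ, if_true, ← Finset.sum_mul]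
    ring
  simp only [inner_sub_right, mul_sub, Finset.sum_sub_distrib, hsum]
  ring

end Equiangular

theorem lt_of_mul_eq_mul_of_monotone_of_neg {g : ℝ → ℝ} (hmono : Monotone g)
    (hneg : ∀ z, g z < 0) {A B x y : ℝ} (hA : 0 ≤ A) (hAB : A < B)
    (heq : A * g x = B * g y) : x < y := by
  by_contra! hyx
  have hgyx : g y ≤ g x := hmono hyx
  nlinarith [hneg x, hneg y]

open scoped RealInnerProductSpace in
theorem fisher_consistency_angle_based_general (K : ℕ)
    (w : Fin K → EuclideanSpace ℝ (Fin (K - 1)))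
    (hnorm : ∀ j, ‖w j‖ = 1)
    (hinner : ∀ i j : Fin K, i ≠ j → ⟪w i, w j⟫ = -1 / ((K : ℝ) - 1))
    (ℓ : ℝ → ℝ) (hconv : ConvexOn ℝ Set.univ ℓ) (hdiff : Differentiable ℝ ℓ)
    (hderiv : ∀ z : ℝ, deriv ℓ z < 0)
    (C : Fin K → Fin K → ℝ) (hC : ∀ j t, 0 ≤ C j t)
    (P : Fin K → ℝ) (hP : ∀ j, 0 ≤ P j)
    (fstar : EuclideanSpace ℝ (Fin (K - 1)))
    (hmin : ∀ f : EuclideanSpace ℝ (Fin (K - 1)),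
      ∑ j : Fin K, ∑ t : Fin K, C j t * P j * ℓ (-⟪w t, fstar⟫)
        ≤ ∑ j : Fin K, ∑ t : Fin K, C j t * P j * ℓ (-⟪w t, f⟫))
    (k k' : Fin K)
    (hkk' : ∑ j : Fin K, C j k * P j < ∑ j : Fin K, C j k' * P j) :
    ⟪w k, fstar⟫ > ⟪w k', fstar⟫ := by
  set q : Fin K → ℝ := fun t => ∑ j, C j t * P j
  have hrisk : ∀ f : EuclideanSpace ℝ (Fin (K - 1)),
      ∑ j, ∑ t, C j t * P j * ℓ (-⟪w t, f⟫) = ∑ t, q t * ℓ (-⟪w t, f⟫) := fun f => by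
    rw [Finset.sum_comm]
    simp only [q, Finset.sum_mul]
  have hc : -1 / ((K : ℝ) - 1) < 1 := by
    have hK : (1 : ℝ) ≤ K := by exact_mod_cast k.pos
    linarith [div_nonpos_of_nonpos_of_nonneg (by norm_num : (-1 : ℝ) ≤ 0) (sub_nonneg.2 hK)]
  have hfirst := sum_mul_deriv_mul_inner_eq_zero_of_forall_le hdiff q w fstar
    (fun f => by simpa only [hrisk] using hmin f) (w k - w k')
  rw [sum_mul_inner_sub_of_equiangular hnorm hinner, mul_eq_zero, sub_eq_zero, sub_eq_zero] at hfirst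
  have hbalance : q k * deriv ℓ (-⟪w k, fstar⟫) = q k' * deriv ℓ (-⟪w k', fstar⟫) :=
    hfirst.resolve_left (by linarith)
  have hmono : Monotone (deriv ℓ) :=
    monotoneOn_univ.1 (hconv.monotoneOn_deriv fun x _ => hdiff x)
  have hlt := lt_of_mul_eq_mul_of_monotone_of_neg hmono hderiv
    (Finset.sum_nonneg fun j _ => mul_nonneg (hC j k) (hP j)) hkk' hbalance
  exact neg_lt_neg_iff.1 hlt

/-- Fisher consistency of the angle-based cost-sensitive loss. -/
theorem fisher_consistency_angle_based (K : ℕ) (hK : 2 ≤ K)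
    (w : Fin K → EuclideanSpace ℝ (Fin (K - 1)))
    (hnorm : ∀ j, ‖w j‖ = 1)
    (hinner : ∀ i j : Fin K, i ≠ j → ⟪w i, w j⟫ = -1 / ((K : ℝ) - 1))
    (hsum : ∑ j : Fin K, w j = 0)
    (ℓ : ℝ → ℝ) (hconv : ConvexOn ℝ Set.univ ℓ) (hdiff : Differentiable ℝ ℓ)
    (hderiv : ∀ z : ℝ, deriv ℓ z < 0)
    (C : Fin K → Fin K → ℝ) (hC : ∀ j t, 0 ≤ C j t) (hCdiag : ∀ j, C j j = 0)
    (P : Fin K → ℝ) (hP : ∀ j, 0 ≤ P j) (hPsum : ∑ j : Fin K, P j = 1)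
    (fstar : EuclideanSpace ℝ (Fin (K - 1)))
    (hmin : ∀ f : EuclideanSpace ℝ (Fin (K - 1)),
      ∑ j : Fin K, ∑ t : Fin K, C j t * P j * ℓ (-⟪w t, fstar⟫)
        ≤ ∑ j : Fin K, ∑ t : Fin K, C j t * P j * ℓ (-⟪w t, f⟫))
    (k k' : Fin K)
    (hkk' : ∑ j : Fin K, C j k * P j < ∑ j : Fin K, C j k' * P j) :
    ⟪w k, fstar⟫ > ⟪w k', fstar⟫ :=
  fisher_consistency_angle_based_general K w hnorm hinner ℓ hconv hdiff hderiv C hC P hP fstar hmin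
    k k' hkk'
end

section
/- (Exponential loss inversion) Suppose ℓ(z) = e^{-z}, costs are cost-insensitive (C_{j,t} = 𝟙(j≠t)), P_t ∈ (0,1) for all t with ∑_t P_t = 1, and f* satisfies P_t = 1 + (1-K)e^{-⟨w_t,f*⟩}/∑_k e^{-⟨w_k,f*⟩} together with ∑_t ⟨w_t, f*⟩ = 0. Then for each t: ⟨w_t, f*⟩ = (1/K)∑_{k=1}^K log(1 - P_k) - log(1 - P_t). -/
open scoped RealInnerProductSpace
open Real Finset

/-!
Write `a_t = ⟪w_t, f*⟫` and `S = ∑_k e^{-a_k}`. The hypothesis on `P` says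
`1 - P_t = (K - 1) e^{-a_t} / S`, so `log (1 - P_t) = c - a_t` with a constant
`c = log (K - 1) - log S` independent of `t`. Averaging over `t` and using `∑_t a_t = 0`
identifies `c` as the mean of the `log (1 - P_k)`.
-/

lemma eq_average_sub_of_eq_const_sub {ι : Type*} [Fintype ι] {a x : ι → ℝ} {c : ℝ}
    (hx : ∀ t, x t = c - a t) (ha : ∑ t, a t = 0) (t : ι) :
    a t = 1 / (Fintype.card ι : ℝ) * ∑ k, x k - x t := by
  have : Nonempty ι := ⟨t⟩
  have hcard : (Fintype.card ι : ℝ) ≠ 0 := Nat.cast_ne_zero.mpr Fintype.card_ne_zero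
  have hsum : ∑ k, x k = Fintype.card ι * c := by
    simp only [hx, sum_sub_distrib, ha, sum_const, card_univ, nsmul_eq_mul, sub_zero]
  rw [hsum, hx t, one_div, inv_mul_cancel_left₀ hcard]
  ring

lemma Real.log_mul_exp_div {c S : ℝ} (hc : 0 < c) (hS : 0 < S) (y : ℝ) :
    log (c * exp y / S) = log c - log S + y := by
  rw [log_div (by positivity) hS.ne', log_mul hc.ne' (exp_pos y).ne', log_exp]
  ring

theorem exp_loss_inversion_general (K : ℕ) (hK : 2 ≤ K)
    (w : Fin K → EuclideanSpace ℝ (Fin (K - 1)))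
    (P : Fin K → ℝ)
    (fstar : EuclideanSpace ℝ (Fin (K - 1)))
    (hprob : ∀ t : Fin K,
      P t = 1 + ((1 - (K : ℝ)) * Real.exp (-⟪w t, fstar⟫))
        / ∑ k : Fin K, Real.exp (-⟪w k, fstar⟫))
    (hzero : ∑ t : Fin K, ⟪w t, fstar⟫ = 0) :
    ∀ t : Fin K,
      ⟪w t, fstar⟫ = (1 / (K : ℝ)) * (∑ k : Fin K, Real.log (1 - P k))
        - Real.log (1 - P t) := by
  intro t
  set S := ∑ k : Fin K, exp (-⟪w k, fstar⟫)
  have hS : 0 < S := sum_pos (fun k _ => exp_pos _) ⟨t, mem_univ t⟩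
  have hK1 : (0 : ℝ) < K - 1 := by
    have : (2 : ℝ) ≤ K := by exact_mod_cast hK
    linarith
  have hlog : ∀ k, log (1 - P k) = (log (K - 1) - log S) - ⟪w k, fstar⟫ := by
    intro k
    rw [hprob k, show ∀ e : ℝ, 1 - (1 + (1 - K) * e / S) = (K - 1) * e / S by intro e; ring,
      log_mul_exp_div hK1 hS]
    ring
  simpa only [Fintype.card_fin] using eq_average_sub_of_eq_const_sub hlog hzero t

/-- Exponential-loss inversion: expressing `⟪w_t, f*⟫` in terms of the class
probabilities in the cost-insensitive case. -/
theorem exp_loss_inversion (K : ℕ) (hK : 2 ≤ K)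
    (w : Fin K → EuclideanSpace ℝ (Fin (K - 1)))
    (hwsum : ∑ t : Fin K, w t = 0)
    (P : Fin K → ℝ) (hP : ∀ t, P t ∈ Set.Ioo (0 : ℝ) 1)
    (hPsum : ∑ t : Fin K, P t = 1)
    (fstar : EuclideanSpace ℝ (Fin (K - 1)))
    (hprob : ∀ t : Fin K,
      P t = 1 + ((1 - (K : ℝ)) * Real.exp (-⟪w t, fstar⟫))
        / ∑ k : Fin K, Real.exp (-⟪w k, fstar⟫))
    (hzero : ∑ t : Fin K, ⟪w t, fstar⟫ = 0) :
    ∀ t : Fin K,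
      ⟪w t, fstar⟫ = (1 / (K : ℝ)) * (∑ k : Fin K, Real.log (1 - P k))
        - Real.log (1 - P t) :=
  exp_loss_inversion_general K hK w P fstar hprob hzero
end

section
/- (Large-margin unified loss regularity) For parameters c ≥ 0 and a > 0, the function ℓ(z) = 1 - z for z < c/(1+c) and ℓ(z) = (1/(1+c))·[a/((1+c)z - c + a)]^a for z ≥ c/(1+c) is continuous, differentiable at z = c/(1+c) with derivative -1, convex on ℝ, and ℓ'(z) < 0 for all z. -/
/-!
Writing `u = (1 + c) z - c + a`, the right branch is `(a / u) ^ a / (1 + c)`, whose derivative is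
`-(a / u) ^ (a + 1)`. At the junction `z = c / (1 + c)` we have `u = a`, so both branches take the
value `1 / (1 + c)` and have slope `-1`; the glued function is therefore differentiable everywhere.
Since `u < a` exactly on the left branch, the derivative is `-(a / max a u) ^ (a + 1)` everywhere,
which is negative and nondecreasing in `z`; the latter gives convexity.
-/

/-- The large-margin unified loss with parameters `c ≥ 0`, `a > 0`. -/
noncomputable def lumLoss (c a z : ℝ) : ℝ :=
  if z < c / (1 + c) then 1 - z
  else (1 / (1 + c)) * (a / ((1 + c) * z - c + a)) ^ a

open Set Filter Topology

theorem hasDerivAt_ite_lt {f g f' g' : ℝ → ℝ} {t : ℝ}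
    (hf : ∀ x ≤ t, HasDerivAt f (f' x) x) (hg : ∀ x ≥ t, HasDerivAt g (g' x) x)
    (hfg : f t = g t) (hfg' : f' t = g' t) (z : ℝ) :
    HasDerivAt (fun x => if x < t then f x else g x) (if z < t then f' z else g' z) z := by
  rcases lt_trichotomy z t with hz | rfl | hz
  · rw [if_pos hz]
    refine (hf z hz.le).congr_of_eventuallyEq ?_
    filter_upwards [Iio_mem_nhds hz] with x hx
    exact if_pos hx
  · rw [if_neg (lt_irrefl z)]
    have hleft : HasDerivWithinAt (fun x => if x < z then f x else g x) (g' z) (Iic z) z := by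
      rw [← hfg']
      refine (hf z le_rfl).hasDerivWithinAt.congr (fun x hx => ?_) (by simp [hfg])
      rcases (mem_Iic.1 hx).lt_or_eq with hxz | rfl
      · rw [if_pos hxz]
      · simp [hfg]
    have hright : HasDerivWithinAt (fun x => if x < z then f x else g x) (g' z) (Ici z) z :=
      (hg z le_rfl).hasDerivWithinAt.congr (fun x hx => if_neg (not_lt.2 hx)) (by simp)
    simpa only [Iic_union_Ici, hasDerivWithinAt_univ] using hleft.union hright
  · rw [if_neg hz.not_gt]
    refine (hg z hz.le).congr_of_eventuallyEq ?_
    filter_upwards [Ioi_mem_nhds hz] with x hx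
    exact if_neg (not_lt.2 hx.le)

theorem hasDerivAt_div_rpow_self {a x : ℝ} (ha : 0 < a) (hx : 0 < x) :
    HasDerivAt (fun x => (a / x) ^ a) (-(a / x) ^ (a + 1)) x := by
  have hax : 0 < a / x := div_pos ha hx
  have hdiv : HasDerivAt (fun x => a / x) (-a / x ^ 2) x := by
    simpa [div_eq_mul_inv, neg_div] using (hasDerivAt_inv hx.ne').const_mul a
  convert hdiv.rpow_const (p := a) (Or.inl hax.ne') using 1
  rw [Real.rpow_add hax, Real.rpow_sub hax, Real.rpow_one]
  field_simp

noncomputable def lumDeriv (c a z : ℝ) : ℝ :=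
  if z < c / (1 + c) then -1 else -(a / ((1 + c) * z - c + a)) ^ (a + 1)

section

variable {c a : ℝ}

theorem lt_div_one_add_iff (hc : 0 < 1 + c) (a z : ℝ) :
    z < c / (1 + c) ↔ (1 + c) * z - c + a < a := by
  rw [lt_div_iff₀ hc]
  constructor <;> intro h <;> linarith

theorem div_one_add_le_iff (hc : 0 < 1 + c) (a z : ℝ) :
    c / (1 + c) ≤ z ↔ a ≤ (1 + c) * z - c + a := by
  simpa only [not_lt] using (lt_div_one_add_iff hc a z).not

theorem one_add_mul_div_one_add_sub_add (hc : 1 + c ≠ 0) (a : ℝ) :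
    (1 + c) * (c / (1 + c)) - c + a = a := by
  field_simp
  ring

theorem lumDeriv_div_one_add (hc : 0 < 1 + c) (ha : a ≠ 0) : lumDeriv c a (c / (1 + c)) = -1 := by
  simp [lumDeriv, one_add_mul_div_one_add_sub_add hc.ne', div_self ha]

theorem hasDerivAt_lumLoss (hc : 0 < 1 + c) (ha : 0 < a) (z : ℝ) :
    HasDerivAt (lumLoss c a) (lumDeriv c a z) z := by
  have hjunction := one_add_mul_div_one_add_sub_add hc.ne' a
  unfold lumLoss lumDeriv
  refine hasDerivAt_ite_lt (f' := fun _ => -1)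
    (g' := fun x => -(a / ((1 + c) * x - c + a)) ^ (a + 1))
    (fun x _ => (hasDerivAt_id' x).const_sub 1) (fun x hx => ?_) ?_ ?_ z
  · have haff : HasDerivAt (fun x => (1 + c) * x - c + a) (1 + c) x := by
      simpa using (((hasDerivAt_id x).const_mul (1 + c)).sub_const c).add_const a
    have hu : 0 < (1 + c) * x - c + a := ha.trans_le ((div_one_add_le_iff hc a x).1 hx)
    exact (((hasDerivAt_div_rpow_self ha hu).comp x haff).const_mul (1 / (1 + c))).congr_deriv
      (by field_simp)
  · rw [hjunction, div_self ha.ne', Real.one_rpow]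
    field_simp
    ring
  · simp only [hjunction, div_self ha.ne', Real.one_rpow]

theorem lumDeriv_eq_neg_rpow_max (hc : 0 < 1 + c) (ha : a ≠ 0) (z : ℝ) :
    lumDeriv c a z = -(a / max a ((1 + c) * z - c + a)) ^ (a + 1) := by
  rcases lt_or_ge z (c / (1 + c)) with hz | hz
  · rw [lumDeriv, if_pos hz, max_eq_left ((lt_div_one_add_iff hc a z).1 hz).le, div_self ha,
      Real.one_rpow]
  · rw [lumDeriv, if_neg (not_lt.2 hz), max_eq_right ((div_one_add_le_iff hc a z).1 hz)]

theorem lumDeriv_neg (hc : 0 < 1 + c) (ha : 0 < a) (z : ℝ) : lumDeriv c a z < 0 := by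
  rw [lumDeriv_eq_neg_rpow_max hc ha.ne', neg_lt_zero]
  exact Real.rpow_pos_of_pos (div_pos ha (ha.trans_le (le_max_left _ _))) _

theorem monotone_lumDeriv (hc : 0 < 1 + c) (ha : 0 < a) : Monotone (lumDeriv c a) := by
  intro x y hxy
  simp only [lumDeriv_eq_neg_rpow_max hc ha.ne', neg_le_neg_iff]
  have hmax : max a ((1 + c) * x - c + a) ≤ max a ((1 + c) * y - c + a) :=
    max_le_max le_rfl (by nlinarith)
  exact Real.rpow_le_rpow (div_nonneg ha.le (ha.le.trans (le_max_left _ _)))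
    (div_le_div_of_nonneg_left ha.le (ha.trans_le (le_max_left _ _)) hmax) (by linarith)

end

/-- Regularity of the large-margin unified loss: it is continuous, differentiable
at `z = c/(1+c)` with derivative `-1`, convex, and has everywhere negative derivative. -/
theorem lumLoss_regularity (c a : ℝ) (hc : 0 ≤ c) (ha : 0 < a) :
    Continuous (lumLoss c a) ∧
    HasDerivAt (lumLoss c a) (-1) (c / (1 + c)) ∧
    ConvexOn ℝ Set.univ (lumLoss c a) ∧
    (∀ z : ℝ, deriv (lumLoss c a) z < 0) := by
  have hc1 : 0 < 1 + c := by linarith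
  have hd := hasDerivAt_lumLoss hc1 ha
  have hdiff : Differentiable ℝ (lumLoss c a) := fun z => (hd z).differentiableAt
  have hderiv : deriv (lumLoss c a) = lumDeriv c a := funext fun z => (hd z).deriv
  refine ⟨hdiff.continuous, ?_, ?_, ?_⟩
  · simpa [lumDeriv_div_one_add hc1 ha.ne'] using hd (c / (1 + c))
  · exact (hderiv ▸ monotone_lumDeriv hc1 ha).convexOn_univ_of_deriv hdiff
  · simpa [hderiv] using lumDeriv_neg hc1 ha
end

section
/- (AdaBoost optimal step size) Fix K ≥ 2 and ε ∈ (0,1). Let cos θ_K = 1/(1-K) and define R(β) = e^{β cos θ_K} + (e^{β} - e^{β cos θ_K})·ε. Then R is convex in β and its unique minimizer is β* = ((K-1)/K)·[log((1-ε)/ε) - log(K-1)]. Moreover β* > 0 if and only if ε < 1/K. -/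
/-- AdaBoost optimal step size: with `cos θ_K = 1/(1-K)`,
`R(β) = e^{β cos θ_K} + (e^β - e^{β cos θ_K})·ε` is convex with unique minimizer
`β* = ((K-1)/K)[log((1-ε)/ε) - log(K-1)]`, and `β* > 0 ↔ ε < 1/K`. -/
theorem adaboost_optimal_step (K : ℕ) (hK : 2 ≤ K) (ε : ℝ) (hε : ε ∈ Set.Ioo (0 : ℝ) 1)
    (cosθ : ℝ) (hcos : cosθ = 1 / (1 - (K : ℝ)))
    (R : ℝ → ℝ)
    (hR : ∀ β : ℝ, R β = Real.exp (β * cosθ) + (Real.exp β - Real.exp (β * cosθ)) * ε)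
    (βstar : ℝ)
    (hβ : βstar = (((K : ℝ) - 1) / (K : ℝ)) *
      (Real.log ((1 - ε) / ε) - Real.log ((K : ℝ) - 1))) :
    ConvexOn ℝ Set.univ R ∧
    (∀ β : ℝ, β ≠ βstar → R βstar < R β) ∧
    (0 < βstar ↔ ε < 1 / (K : ℝ)) := by
  obtain ⟨hε0, hε1⟩ := hε
  have hK2 : (2:ℝ) ≤ (K:ℝ) := by exact_mod_cast hK
  have hK1 : (0:ℝ) < (K:ℝ) - 1 := by linarith
  have hKpos : (0:ℝ) < (K:ℝ) := by linarith
  set c := cosθ with hc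
  have hne1 : (1:ℝ) - (K:ℝ) ≠ 0 := by linarith
  have hne2 : (K:ℝ) - 1 ≠ 0 := ne_of_gt hK1
  have hcval : c = -(1/((K:ℝ)-1)) := by
    rw [hcos]; field_simp; ring
  have hcneg : c < 0 := by
    rw [hcval]
    have : 0 < 1/((K:ℝ)-1) := by positivity
    linarith
  have h1cpos : 0 < 1 - c := by linarith
  have hRe : R = fun β => Real.exp (β * c) + (Real.exp β - Real.exp (β * c)) * ε :=
    funext hR
  set G : ℝ → ℝ := fun β => ((1-ε)*c) * Real.exp (β*c) + ε * Real.exp β with hGdef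
  have h1 : ∀ β : ℝ, HasDerivAt (fun β => Real.exp (β*c)) (c * Real.exp (β*c)) β := by
    intro β
    refine ((Real.hasDerivAt_exp (β*c)).comp β ((hasDerivAt_id β).mul_const c)).congr_deriv ?_; ring
  have hF' : ∀ β : ℝ, HasDerivAt R (G β) β := by
    intro β
    rw [hRe]
    have h := (h1 β).add (((Real.hasDerivAt_exp β).sub (h1 β)).mul_const ε)
    refine h.congr_deriv ?_
    simp [hGdef]; ring
  have hG' : ∀ β : ℝ, HasDerivAt G (((1-ε)*c^2) * Real.exp (β*c) + ε * Real.exp β) β := by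
    intro β
    have h := ((h1 β).const_mul ((1-ε)*c)).add ((Real.hasDerivAt_exp β).const_mul ε)
    refine h.congr_deriv ?_; ring
  have hderivR : deriv R = G := funext fun β => (hF' β).deriv
  have hcontR : Continuous R := by
    rw [hRe]; fun_prop
  -- strict convexity
  have hsc : StrictConvexOn ℝ Set.univ R := by
    apply strictConvexOn_of_deriv2_pos convex_univ hcontR.continuousOn
    intro x _
    have : deriv (deriv R) x = ((1-ε)*c^2) * Real.exp (x*c) + ε * Real.exp x := by
      rw [hderivR]; exact (hG' x).deriv
    simp only [Function.iterate_succ, Function.iterate_zero, Function.comp_apply, id_eq]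
    rw [this]
    have hc2 : 0 < c^2 := by nlinarith
    have ha : 0 < (1-ε)*c^2*Real.exp (x*c) := by
      have : (0:ℝ) < 1 - ε := by linarith
      positivity
    have hb : 0 < ε*Real.exp x := by positivity
    linarith
  -- key exponential identity
  have hexpstar : Real.exp (βstar*(1-c)) = (1-ε)/(ε*((K:ℝ)-1)) := by
    have hb : βstar*(1-c) = Real.log ((1-ε)/ε) - Real.log ((K:ℝ)-1) := by
      rw [hβ, hcval]; field_simp; ring
    rw [hb, Real.exp_sub, Real.exp_log (div_pos (by linarith) hε0), Real.exp_log hK1,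
      div_div]
  have key : ε * Real.exp (βstar*(1-c)) = (1-ε) * (-c) := by
    rw [hexpstar, hcval]; field_simp
  have hGfac : ∀ β : ℝ, G β = ε * Real.exp (β*c) * (Real.exp (β*(1-c)) - Real.exp (βstar*(1-c))) := by
    intro β
    have e1 : Real.exp (β*c) * Real.exp (β*(1-c)) = Real.exp β := by
      rw [← Real.exp_add]; congr 1; ring
    simp only [hGdef]
    linear_combination (-ε) * e1 + Real.exp (β*c) * key
  have hpos : ∀ x ∈ Set.Ioi βstar, 0 < deriv R x := by
    intro x hx
    rw [hderivR, hGfac]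
    have : Real.exp (βstar*(1-c)) < Real.exp (x*(1-c)) := by
      apply Real.exp_lt_exp.mpr; nlinarith [Set.mem_Ioi.mp hx]
    exact mul_pos (mul_pos hε0 (Real.exp_pos _)) (sub_pos.mpr this)
  have hneg : ∀ x ∈ Set.Iio βstar, deriv R x < 0 := by
    intro x hx
    rw [hderivR, hGfac]
    have : Real.exp (x*(1-c)) < Real.exp (βstar*(1-c)) := by
      apply Real.exp_lt_exp.mpr; nlinarith [Set.mem_Iio.mp hx]
    exact mul_neg_of_pos_of_neg (mul_pos hε0 (Real.exp_pos _)) (sub_neg.mpr this)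
  have hmono : StrictMonoOn R (Set.Ici βstar) := by
    apply strictMonoOn_of_deriv_pos (convex_Ici _) hcontR.continuousOn
    rw [interior_Ici]; exact hpos
  have hanti : StrictAntiOn R (Set.Iic βstar) := by
    apply strictAntiOn_of_deriv_neg (convex_Iic _) hcontR.continuousOn
    rw [interior_Iic]; exact hneg
  refine ⟨hsc.convexOn, ?_, ?_⟩
  · intro β hne
    rcases lt_or_gt_of_ne hne with h | h
    · exact hanti (Set.mem_Iic.mpr h.le) (Set.mem_Iic.mpr le_rfl) h
    · exact hmono (Set.mem_Ici.mpr le_rfl) (Set.mem_Ici.mpr h.le) h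
  · have hL : 0 < βstar ↔ Real.log ((K:ℝ)-1) < Real.log ((1-ε)/ε) := by
      rw [hβ]
      constructor
      · intro h; nlinarith [div_pos hK1 hKpos]
      · intro h
        have hq : 0 < ((K:ℝ)-1)/(K:ℝ) := div_pos hK1 hKpos
        nlinarith
    rw [hL, Real.log_lt_log_iff hK1 (div_pos (by linarith) hε0), lt_div_iff₀ hε0,
      lt_div_iff₀ hKpos]
    constructor <;> intro h <;> nlinarith
end
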